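/- arXiv:1907.00264 — 5 statements merged into one kernel-verified Lean document; each statement's English description precedes it below -/
import Mathlib

section
/- For all 0 < δ < 1/2 and α > 1/2, the double integral ∫₀¹∫₀¹ s^{1+α} / (δ + s + t²)³ dt ds is bounded by a constant C(α) depending only on α (independent of δ). -/
/-!
Weighted AM-GM gives `s ^ l * (t ^ 2) ^ (1 - l) ≤ δ + s + t ^ 2` for `l ∈ [0, 1]`, so the integrand
is at most `s ^ (1 + α - 3 l) * t ^ (6 l - 6)`, uniformly in `δ ≥ 0`. This product is integrable over
`[0, 1]²` as soon as `6 l - 6 > -1` and `1 + α - 3 l > -1`, i.e. `5/6 < l < (2 + α)/3`, and that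
window is nonempty exactly because `α > 1/2`.
-/

open MeasureTheory Set

theorem intervalIntegral.integral_mono_on_Ioo_of_nonneg {f g : ℝ → ℝ} {a b : ℝ} (hab : a ≤ b)
    (hg : IntervalIntegrable g volume a b) (hf : ∀ x ∈ Ioo a b, 0 ≤ f x)
    (hfg : ∀ x ∈ Ioo a b, f x ≤ g x) :
    ∫ x in a..b, f x ≤ ∫ x in a..b, g x := by
  rw [intervalIntegral.integral_of_le hab, intervalIntegral.integral_of_le hab,
    integral_Ioc_eq_integral_Ioo, integral_Ioc_eq_integral_Ioo]
  exact integral_mono_of_nonneg ((ae_restrict_iff' measurableSet_Ioo).2 (ae_of_all _ hf))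
    (hg.1.mono_set Ioo_subset_Ioc_self) ((ae_restrict_iff' measurableSet_Ioo).2 (ae_of_all _ hfg))

theorem integral_rpow_zero_one {r : ℝ} (hr : -1 < r) : ∫ x in (0:ℝ)..1, x ^ r = 1 / (r + 1) := by
  rw [integral_rpow (Or.inl hr), Real.one_rpow, Real.zero_rpow (by linarith), sub_zero]

theorem Real.rpow_mul_rpow_le_add {a b l : ℝ} (ha : 0 ≤ a) (hb : 0 ≤ b) (hl₀ : 0 ≤ l) (hl₁ : l ≤ 1) :
    a ^ l * b ^ (1 - l) ≤ a + b := by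
  have := Real.geom_mean_le_arith_mean2_weighted hl₀ (sub_nonneg.2 hl₁) ha hb (by ring)
  nlinarith [mul_nonneg hl₀ hb, mul_nonneg (sub_nonneg.2 hl₁) ha]

theorem rpow_div_cube_le {β δ l s t : ℝ} (hδ : 0 ≤ δ) (hs : 0 < s) (ht : 0 < t)
    (hl₀ : 0 ≤ l) (hl₁ : l ≤ 1) :
    s ^ β / (δ + s + t ^ 2) ^ 3 ≤ s ^ (β - 3 * l) * t ^ (6 * l - 6) := by
  have hmean : s ^ l * t ^ (2 - 2 * l) ≤ δ + s + t ^ 2 := by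
    have h := Real.rpow_mul_rpow_le_add hs.le (sq_nonneg t) hl₀ hl₁
    rw [← Real.rpow_two t, ← Real.rpow_mul ht.le, Real.rpow_two] at h
    calc s ^ l * t ^ (2 - 2 * l) = s ^ l * t ^ (2 * (1 - l)) := by ring_nf
      _ ≤ δ + s + t ^ 2 := by linarith
  have hcube : s ^ (3 * l) * t ^ (6 - 6 * l) ≤ (δ + s + t ^ 2) ^ 3 := by
    calc s ^ (3 * l) * t ^ (6 - 6 * l) = (s ^ l * t ^ (2 - 2 * l)) ^ 3 := by
          rw [mul_pow, ← Real.rpow_mul_natCast hs.le, ← Real.rpow_mul_natCast ht.le]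
          ring_nf
      _ ≤ (δ + s + t ^ 2) ^ 3 := pow_le_pow_left₀ (by positivity) hmean 3
  calc s ^ β / (δ + s + t ^ 2) ^ 3 ≤ s ^ β / (s ^ (3 * l) * t ^ (6 - 6 * l)) := by gcongr
    _ = s ^ (β - 3 * l) * t ^ (6 * l - 6) := by
      rw [Real.rpow_sub hs, show 6 * l - 6 = -(6 - 6 * l) by ring, Real.rpow_neg ht.le]
      field_simp

theorem integral_integral_rpow_div_cube_le {β δ l : ℝ} (hδ : 0 ≤ δ) (hl₀ : 5 / 6 < l)
    (hl₁ : l ≤ 1) (hβ : 3 * l < β + 1) :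
    ∫ s in (0:ℝ)..1, ∫ t in (0:ℝ)..1, s ^ β / (δ + s + t ^ 2) ^ 3
      ≤ 1 / ((β - 3 * l + 1) * (6 * l - 5)) := by
  have inner : ∀ s ∈ Ioo (0:ℝ) 1,
      ∫ t in (0:ℝ)..1, s ^ β / (δ + s + t ^ 2) ^ 3 ≤ s ^ (β - 3 * l) / (6 * l - 5) := by
    intro s hs
    calc ∫ t in (0:ℝ)..1, s ^ β / (δ + s + t ^ 2) ^ 3
        ≤ ∫ t in (0:ℝ)..1, s ^ (β - 3 * l) * t ^ (6 * l - 6) :=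
          intervalIntegral.integral_mono_on_Ioo_of_nonneg zero_le_one
            ((intervalIntegral.intervalIntegrable_rpow' (by linarith)).const_mul _)
            (fun _ _ => by have := hs.1; positivity)
            (fun t ht => rpow_div_cube_le hδ hs.1 ht.1 (by linarith) hl₁)
      _ = s ^ (β - 3 * l) / (6 * l - 5) := by
          rw [intervalIntegral.integral_const_mul, integral_rpow_zero_one (by linarith)]
          ring_nf
  calc ∫ s in (0:ℝ)..1, ∫ t in (0:ℝ)..1, s ^ β / (δ + s + t ^ 2) ^ 3
      ≤ ∫ s in (0:ℝ)..1, s ^ (β - 3 * l) / (6 * l - 5) :=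
        intervalIntegral.integral_mono_on_Ioo_of_nonneg zero_le_one
          ((intervalIntegral.intervalIntegrable_rpow' (by linarith)).div_const _)
          (fun s hs => intervalIntegral.integral_nonneg zero_le_one
            fun _ _ => by have := hs.1; positivity)
          inner
    _ = 1 / ((β - 3 * l + 1) * (6 * l - 5)) := by
        rw [intervalIntegral.integral_div, integral_rpow_zero_one (by linarith), div_div]

/-- For all `0 < δ < 1/2` and `α > 1/2`, the double integral
`∫₀¹∫₀¹ s^(1+α) / (δ + s + t²)³ dt ds` is bounded by a constant `C(α)`
depending only on `α` (independent of `δ`). -/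
theorem stmt1 (α : ℝ) (hα : 1/2 < α) :
    ∃ C : ℝ, 0 < C ∧ ∀ δ : ℝ, 0 < δ → δ < 1/2 →
      (∫ s in (0:ℝ)..1, ∫ t in (0:ℝ)..1, s ^ (1 + α) / (δ + s + t^2)^3) ≤ C := by
  -- `(9 + 2α)/12` is the midpoint of the window `(5/6, (2 + α)/3)`
  set l := min 1 ((9 + 2 * α) / 12)
  have hl₀ : 5 / 6 < l := lt_min (by norm_num) (by linarith)
  have hβ : 3 * l < 1 + α + 1 := by linarith [min_le_right 1 ((9 + 2 * α) / 12)]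
  refine ⟨1 / ((1 + α - 3 * l + 1) * (6 * l - 5)), by apply div_pos <;> nlinarith,
    fun δ hδ _ => integral_integral_rpow_div_cube_le hδ.le hl₀ (min_le_left _ _) hβ⟩
end

section
/- For 0 < δ < 1/2 and α = 1/2, the double integral ∫₀¹∫₀¹ s^{3/2} / (δ + s + t²)³ dt ds is bounded by C · (1 + |log δ|) for an absolute constant C. -/
open MeasureTheory Set

/-! With `a = √(δ + s)`, the numerator is at most `a³` and `(a + t)² ≤ 2 (a² + t²)`, so the inner
integrand is at most `2 / (a (a + t)²)`, whose integral over `t ∈ [0, 1]` is at most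
`2 / a² = 2 / (δ + s)`. Integrating `2 / (δ + s)` over `s ∈ [0, 1]` gives `2 log ((δ + 1) / δ)`. -/

/-- Only `g` needs to be integrable: a non-integrable `f` has integral `0 ≤ ∫ g`. -/
theorem intervalIntegral.integral_mono_on_of_nonneg {f g : ℝ → ℝ} {a b : ℝ} (hab : a ≤ b)
    (hf : ∀ x ∈ Icc a b, 0 ≤ f x) (hfg : ∀ x ∈ Icc a b, f x ≤ g x)
    (hg : IntervalIntegrable g volume a b) :
    ∫ x in a..b, f x ≤ ∫ x in a..b, g x := by
  rw [intervalIntegral.integral_of_le hab, intervalIntegral.integral_of_le hab]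
  exact setIntegral_mono_of_nonneg (fun x hx => hf x (Ioc_subset_Icc_self hx))
    (fun x hx => hfg x (Ioc_subset_Icc_self hx)) hg.1

theorem pow_three_div_sq_add_sq_pow_three_le {a t : ℝ} (ha : 0 < a) (ht : 0 ≤ t) :
    a ^ 3 / (a ^ 2 + t ^ 2) ^ 3 ≤ 2 / a * ((a + t) ^ 2)⁻¹ := by
  have hsq : (a + t) ^ 2 ≤ 2 * (a ^ 2 + t ^ 2) := by nlinarith [sq_nonneg (a - t)]
  have hquart : (a ^ 2) ^ 2 ≤ (a ^ 2 + t ^ 2) ^ 2 := by gcongr; nlinarith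
  rw [← div_eq_mul_inv, div_div, div_le_div_iff₀ (by positivity) (by positivity)]
  calc a ^ 3 * (a * (a + t) ^ 2) = (a ^ 2) ^ 2 * (a + t) ^ 2 := by ring
    _ ≤ (a ^ 2 + t ^ 2) ^ 2 * (2 * (a ^ 2 + t ^ 2)) := by gcongr
    _ = 2 * (a ^ 2 + t ^ 2) ^ 3 := by ring

theorem integral_inv_add_sq {a : ℝ} (ha : 0 < a) :
    ∫ t in (0:ℝ)..1, ((a + t) ^ 2)⁻¹ = a⁻¹ - (a + 1)⁻¹ := by
  have h0 : (0:ℝ) ∉ uIcc a (a + 1) := by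
    rw [uIcc_of_le (by linarith)]
    exact fun h => by linarith [h.1]
  rw [intervalIntegral.integral_comp_add_left (fun u => (u ^ 2)⁻¹) a, add_zero]
  simp_rw [← zpow_natCast, ← zpow_neg]
  rw [integral_zpow (Or.inr ⟨by norm_num, h0⟩)]
  norm_num
  ring

theorem integral_inv_add {δ : ℝ} (hδ : 0 < δ) :
    ∫ s in (0:ℝ)..1, (δ + s)⁻¹ = Real.log (δ + 1) - Real.log δ := by
  rw [intervalIntegral.integral_comp_add_left (fun u => u⁻¹) δ, add_zero,
    integral_inv_of_pos hδ (by linarith), Real.log_div (by linarith) hδ.ne']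

theorem log_add_one_sub_log_le {δ : ℝ} (hδ : 0 < δ) :
    Real.log (δ + 1) - Real.log δ ≤ 1 + |Real.log δ| := by
  rcases le_or_gt δ 1 with hδ1 | hδ1
  · have := Real.log_le_sub_one_of_pos (show 0 < δ + 1 by linarith)
    linarith [neg_le_abs (Real.log δ)]
  · rw [← Real.log_div (by linarith) hδ.ne']
    have := Real.log_le_sub_one_of_pos (show 0 < (δ + 1) / δ by positivity)
    have : (δ + 1) / δ - 1 ≤ 1 := by
      rw [div_sub_one hδ.ne', div_le_one hδ]; linarith
    linarith [abs_nonneg (Real.log δ)]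

theorem integral_rpow_three_halves_div_pow_three_le {δ s : ℝ} (hδ : 0 < δ) (hs : 0 ≤ s) :
    ∫ t in (0:ℝ)..1, s ^ ((3:ℝ)/2) / (δ + s + t^2)^3 ≤ 2 / (δ + s) := by
  set a := √(δ + s)
  have ha : 0 < a := Real.sqrt_pos.2 (by positivity)
  have ha2 : a ^ 2 = δ + s := Real.sq_sqrt (by positivity)
  have hnum : s ^ ((3:ℝ)/2) ≤ a ^ 3 := by
    calc s ^ ((3:ℝ)/2) ≤ (δ + s) ^ ((3:ℝ)/2) := by gcongr; linarith
      _ = a ^ 3 := by rw [Real.rpow_div_two_eq_sqrt _ (by positivity)]; norm_cast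
  calc ∫ t in (0:ℝ)..1, s ^ ((3:ℝ)/2) / (δ + s + t^2)^3
      ≤ ∫ t in (0:ℝ)..1, 2 / a * ((a + t) ^ 2)⁻¹ := by
        refine intervalIntegral.integral_mono_on_of_nonneg zero_le_one
          (fun t _ => by positivity) (fun t ht => ?_) ?_
        · rw [← ha2]
          exact (div_le_div_of_nonneg_right hnum (by positivity)).trans
            (pow_three_div_sq_add_sq_pow_three_le ha ht.1)
        · refine (ContinuousOn.intervalIntegrable ?_).const_mul _
          refine ContinuousOn.inv₀ (by fun_prop) fun t ht => ?_
          rw [uIcc_of_le zero_le_one] at ht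
          exact (pow_pos (by linarith [ht.1]) 2).ne'
    _ = 2 / a * (a⁻¹ - (a + 1)⁻¹) := by
        rw [intervalIntegral.integral_const_mul, integral_inv_add_sq ha]
    _ ≤ 2 / a * a⁻¹ := by gcongr; simp only [sub_le_self_iff, inv_nonneg]; positivity
    _ = 2 / (δ + s) := by rw [← ha2]; field_simp

/-- For `0 < δ < 1/2` (the case `α = 1/2`), the double integral
`∫₀¹∫₀¹ s^(3/2) / (δ + s + t²)³ dt ds` is bounded by `C · (1 + |log δ|)`
for an absolute constant `C`. -/
theorem stmt2 :
    ∃ C : ℝ, 0 < C ∧ ∀ δ : ℝ, 0 < δ → δ < 1/2 →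
      (∫ s in (0:ℝ)..1, ∫ t in (0:ℝ)..1, s ^ ((3:ℝ)/2) / (δ + s + t^2)^3)
        ≤ C * (1 + |Real.log δ|) := by
  refine ⟨2, two_pos, fun δ hδ _ => ?_⟩
  calc (∫ s in (0:ℝ)..1, ∫ t in (0:ℝ)..1, s ^ ((3:ℝ)/2) / (δ + s + t^2)^3)
      ≤ ∫ s in (0:ℝ)..1, 2 * (δ + s)⁻¹ := by
        refine intervalIntegral.integral_mono_on_of_nonneg zero_le_one
          (fun s hs => intervalIntegral.integral_nonneg zero_le_one fun t _ => ?_)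
          (fun s hs => (integral_rpow_three_halves_div_pow_three_le hδ hs.1).trans_eq
            (div_eq_mul_inv _ _)) ?_
        · have := hs.1; positivity
        · refine (ContinuousOn.intervalIntegrable ?_).const_mul _
          refine ContinuousOn.inv₀ (by fun_prop) fun s hs => ?_
          rw [uIcc_of_le zero_le_one] at hs
          exact (by linarith [hs.1] : 0 < δ + s).ne'
    _ = 2 * (Real.log (δ + 1) - Real.log δ) := by
        rw [intervalIntegral.integral_const_mul, integral_inv_add hδ]
    _ ≤ 2 * (1 + |Real.log δ|) := by gcongr; exact log_add_one_sub_log_le hδ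
end

section
/- Let n ≥ 2 be an integer, 0 < α < 1, and 0 < δ < 1/2. Then the triple integral ∫₀¹∫₀¹∫₀¹ s₁^{α-1} t^{2n-3} / [(δ + s₁ + s₂ + t²)³ (δ + s₁ + s₂ + t)^{2n-3}] ds₁ ds₂ dt is bounded by C(n, α) · δ^{α - 3/2} for some constant C(n, α). -/
/-!
Since `t ≤ δ + s₁ + s₂ + t`, the factor `t ^ (2n-3) / (δ + s₁ + s₂ + t) ^ (2n-3)` is at most `1`.
Each of the three integrations is then an instance of one estimate: if
`0 ≤ f s ≤ s ^ γ * max a s ^ (μ - γ)` with `γ > -1 > μ`, splitting `[0, 1]` at `s = a` gives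
`∫₀¹ f ≤ C a ^ (μ + 1)`. With `a = δ + t² + s₂` in `s₁` and `a = δ + t²` in `s₂` this bounds the
inner double integral by `(δ + t²) ^ (α - 2)`, and as `δ + t² ≥ max (√δ) t ^ 2`, the last
integration in `t` (with `a = √δ`) gives `√δ ^ (2α - 3) = δ ^ (α - 3/2)`.
-/

open MeasureTheory Real Set intervalIntegral

theorem intervalIntegral.integral_mono_of_nonneg_on {f g : ℝ → ℝ} {a b : ℝ} (hab : a ≤ b)
    (hf : ∀ x ∈ Ioc a b, 0 ≤ f x) (hg : IntervalIntegrable g volume a b)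
    (hfg : ∀ x ∈ Ioc a b, f x ≤ g x) :
    ∫ x in a..b, f x ≤ ∫ x in a..b, g x := by
  rw [integral_of_le hab, integral_of_le hab]
  exact integral_mono_of_nonneg ((ae_restrict_iff' measurableSet_Ioc).mpr (.of_forall hf)) hg.1
    ((ae_restrict_iff' measurableSet_Ioc).mpr (.of_forall hfg))

theorem intervalIntegrable_rpow_mul_max_rpow {γ ν a b c : ℝ} (hγ : -1 < γ) (ha : 0 < a) :
    IntervalIntegrable (fun s => s ^ γ * max a s ^ ν) volume b c := by
  refine (intervalIntegrable_rpow' hγ).mul_continuousOn ?_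
  exact ContinuousOn.rpow_const (by fun_prop) fun s _ => .inl (ha.trans_le (le_max_left a s)).ne'

/-- `∫₀¹ s ^ γ ds + ∫₁^∞ s ^ μ ds`. -/
noncomputable def splitConst (γ μ : ℝ) : ℝ := 1 / (γ + 1) - 1 / (μ + 1)

theorem splitConst_pos {γ μ : ℝ} (hγ : -1 < γ) (hμ : μ < -1) : 0 < splitConst γ μ := by
  have : 0 < 1 / (γ + 1) := one_div_pos.mpr (by linarith)
  have : 1 / (μ + 1) < 0 := one_div_neg.mpr (by linarith)
  unfold splitConst; linarith

theorem integral_rpow_mul_max_rpow_le {γ μ a : ℝ} (hγ : -1 < γ) (hμ : μ < -1) (ha : 0 < a) :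
    ∫ s in (0:ℝ)..1, s ^ γ * max a s ^ (μ - γ) ≤ splitConst γ μ * a ^ (μ + 1) := by
  unfold splitConst
  have hint {b c : ℝ} := intervalIntegrable_rpow_mul_max_rpow (ν := μ - γ) (b := b) (c := c) hγ ha
  have hμ' : 1 / (μ + 1) < 0 := one_div_neg.mpr (by linarith)
  have head (c : ℝ) (hc : 0 ≤ c) (hca : c ≤ a) :
      ∫ s in (0:ℝ)..c, s ^ γ * max a s ^ (μ - γ) = a ^ (μ - γ) * (c ^ (γ + 1) / (γ + 1)) := by
    have hpow : ∫ s in (0:ℝ)..c, s ^ γ = c ^ (γ + 1) / (γ + 1) := by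
      simp [integral_rpow (.inl hγ), zero_rpow (by linarith : γ + 1 ≠ 0)]
    rw [← hpow, ← intervalIntegral.integral_const_mul]
    refine intervalIntegral.integral_congr fun s hs => ?_
    rw [uIcc_of_le hc] at hs
    simp only [max_eq_left (hs.2.trans hca), mul_comm]
  rcases le_or_gt 1 a with h1a | ha1
  · rw [head 1 zero_le_one h1a, one_rpow, sub_mul]
    have : a ^ (μ - γ) ≤ a ^ (μ + 1) := rpow_le_rpow_of_exponent_le h1a (by linarith)
    have : 1 / (μ + 1) * a ^ (μ + 1) ≤ 0 := mul_nonpos_of_nonpos_of_nonneg hμ'.le (by positivity)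
    have : 0 < 1 / (γ + 1) := one_div_pos.mpr (by linarith)
    calc a ^ (μ - γ) * (1 / (γ + 1)) ≤ a ^ (μ + 1) * (1 / (γ + 1)) := by gcongr
      _ ≤ _ := by linarith
  · rw [← integral_add_adjacent_intervals hint hint, head a ha.le le_rfl]
    have tail : ∫ s in a..1, s ^ γ * max a s ^ (μ - γ) = ∫ s in a..1, s ^ μ := by
      refine intervalIntegral.integral_congr fun s hs => ?_
      rw [uIcc_of_le ha1.le] at hs
      simp only [max_eq_right hs.1, ← rpow_add (ha.trans_le hs.1), add_sub_cancel]
    rw [tail, integral_rpow (.inr ⟨hμ.ne, by simp [uIcc_of_le ha1.le, ha.not_ge]⟩), one_rpow,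
      mul_div_assoc', ← rpow_add ha, show μ - γ + (γ + 1) = μ + 1 by ring]
    calc _ = (1 / (γ + 1) - 1 / (μ + 1)) * a ^ (μ + 1) + 1 / (μ + 1) := by ring
      _ ≤ _ := by linarith

theorem integral_le_of_le_rpow_mul_max_rpow {f : ℝ → ℝ} {γ μ a C : ℝ} (hγ : -1 < γ)
    (hμ : μ < -1) (ha : 0 < a) (hC : 0 ≤ C) (hf0 : ∀ s ∈ Ioc 0 1, 0 ≤ f s)
    (hf : ∀ s ∈ Ioc 0 1, f s ≤ C * (s ^ γ * max a s ^ (μ - γ))) :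
    ∫ s in (0:ℝ)..1, f s ≤ C * (splitConst γ μ * a ^ (μ + 1)) := by
  refine (integral_mono_of_nonneg_on zero_le_one hf0
    ((intervalIntegrable_rpow_mul_max_rpow hγ ha).const_mul C) hf).trans ?_
  rw [intervalIntegral.integral_const_mul]
  exact mul_le_mul_of_nonneg_left (integral_rpow_mul_max_rpow_le hγ hμ ha) hC

theorem rpow_add_le_max_rpow {a s p : ℝ} (ha : 0 < a) (hs : 0 ≤ s) (hp : p ≤ 0) :
    (a + s) ^ p ≤ max a s ^ p :=
  rpow_le_rpow_of_nonpos (lt_max_of_lt_left ha) (max_le_add_of_nonneg ha.le hs) hp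

noncomputable def kernel (k : ℕ) (α δ s₁ s₂ t : ℝ) : ℝ :=
  s₁ ^ (α - 1) * t ^ k / ((δ + s₁ + s₂ + t ^ 2) ^ 3 * (δ + s₁ + s₂ + t) ^ k)

section kernel

variable {k : ℕ} {α δ s₁ s₂ t : ℝ}

theorem kernel_nonneg (hδ : 0 < δ) (hs₁ : 0 ≤ s₁) (hs₂ : 0 ≤ s₂) (ht : 0 ≤ t) :
    0 ≤ kernel k α δ s₁ s₂ t := by
  unfold kernel; positivity

theorem kernel_le (hδ : 0 < δ) (hs₁ : 0 ≤ s₁) (hs₂ : 0 ≤ s₂) (ht : 0 ≤ t) :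
    kernel k α δ s₁ s₂ t ≤ s₁ ^ (α - 1) * (δ + t ^ 2 + s₂ + s₁) ^ (-3 : ℝ) := by
  have hD : 0 < δ + s₁ + s₂ + t ^ 2 := by positivity
  have htE : t ^ k / (δ + s₁ + s₂ + t) ^ k ≤ 1 :=
    div_le_one_of_le₀ (pow_le_pow_left₀ ht (by linarith) k) (by positivity)
  calc kernel k α δ s₁ s₂ t
      = s₁ ^ (α - 1) / (δ + s₁ + s₂ + t ^ 2) ^ 3 * (t ^ k / (δ + s₁ + s₂ + t) ^ k) := by
        rw [kernel, mul_div_mul_comm]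
    _ ≤ s₁ ^ (α - 1) / (δ + s₁ + s₂ + t ^ 2) ^ 3 := mul_le_of_le_one_right (by positivity) htE
    _ = s₁ ^ (α - 1) * (δ + t ^ 2 + s₂ + s₁) ^ (-3 : ℝ) := by
        rw [show δ + t ^ 2 + s₂ + s₁ = δ + s₁ + s₂ + t ^ 2 by ring, rpow_neg hD.le,
          show (3 : ℝ) = (3 : ℕ) by norm_num, rpow_natCast, div_eq_mul_inv]

theorem integral_kernel_le (hα0 : 0 < α) (hα3 : α < 3) (hδ : 0 < δ) (hs₂ : 0 ≤ s₂) (ht : 0 ≤ t) :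
    ∫ s₁ in (0:ℝ)..1, kernel k α δ s₁ s₂ t
      ≤ splitConst (α - 1) (α - 4) * (δ + t ^ 2 + s₂) ^ (α - 3) := by
  have ha : 0 < δ + t ^ 2 + s₂ := by positivity
  have := integral_le_of_le_rpow_mul_max_rpow (f := fun s₁ => kernel k α δ s₁ s₂ t) (C := 1)
    (by linarith : -1 < α - 1) (by linarith : α - 4 < -1) ha zero_le_one
    (fun s₁ hs₁ => kernel_nonneg hδ hs₁.1.le hs₂ ht) fun s₁ hs₁ => ?_
  · rwa [one_mul, show α - 4 + 1 = α - 3 by ring] at this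
  rw [one_mul, show α - 4 - (α - 1) = -3 by ring]
  exact (kernel_le hδ hs₁.1.le hs₂ ht).trans
    (mul_le_mul_of_nonneg_left (rpow_add_le_max_rpow ha hs₁.1.le (by norm_num))
      (rpow_nonneg hs₁.1.le _))

theorem integral_integral_kernel_le (hα0 : 0 < α) (hα2 : α < 2) (hδ : 0 < δ) (ht : 0 ≤ t) :
    ∫ s₂ in (0:ℝ)..1, ∫ s₁ in (0:ℝ)..1, kernel k α δ s₁ s₂ t
      ≤ splitConst (α - 1) (α - 4) * (splitConst 0 (α - 3) * (δ + t ^ 2) ^ (α - 2)) := by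
  have ha : 0 < δ + t ^ 2 := by positivity
  have hC : 0 < splitConst (α - 1) (α - 4) := splitConst_pos (by linarith) (by linarith)
  have := integral_le_of_le_rpow_mul_max_rpow
    (f := fun s₂ => ∫ s₁ in (0:ℝ)..1, kernel k α δ s₁ s₂ t)
    (γ := 0) (μ := α - 3) (by norm_num) (by linarith) ha hC.le
    (fun s₂ hs₂ => intervalIntegral.integral_nonneg zero_le_one
      fun s₁ hs₁ => kernel_nonneg hδ hs₁.1 hs₂.1.le ht) fun s₂ hs₂ => ?_
  · rwa [show α - 3 + 1 = α - 2 by ring] at this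
  rw [rpow_zero, one_mul, sub_zero]
  exact (integral_kernel_le hα0 (by linarith) hδ hs₂.1.le ht).trans
    (mul_le_mul_of_nonneg_left (rpow_add_le_max_rpow ha hs₂.1.le (by linarith)) hC.le)

theorem add_sq_rpow_le_max_sqrt_rpow (hδ : 0 < δ) (hα2 : α < 2) :
    (δ + t ^ 2) ^ (α - 2) ≤ max (√δ) t ^ (2 * α - 4) := by
  have hmax : 0 < max (√δ) t := lt_max_of_lt_left (sqrt_pos.mpr hδ)
  have hsq : max (√δ) t ^ 2 ≤ δ + t ^ 2 := by
    rcases le_total (√δ) t with h | h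
    · rw [max_eq_right h]; linarith
    · rw [max_eq_left h, sq_sqrt hδ.le]; exact le_add_of_nonneg_right (sq_nonneg t)
  rw [show 2 * α - 4 = 2 * (α - 2) by ring, rpow_mul hmax.le, rpow_two]
  exact rpow_le_rpow_of_nonpos (by positivity) hsq (by linarith)

theorem integral_integral_integral_kernel_le (hα0 : 0 < α) (hα32 : α < 3 / 2) (hδ : 0 < δ) :
    ∫ t in (0:ℝ)..1, ∫ s₂ in (0:ℝ)..1, ∫ s₁ in (0:ℝ)..1, kernel k α δ s₁ s₂ t
      ≤ splitConst (α - 1) (α - 4) * splitConst 0 (α - 3) * splitConst 0 (2 * α - 4) *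
        δ ^ (α - 3 / 2) := by
  have hC : 0 < splitConst (α - 1) (α - 4) * splitConst 0 (α - 3) :=
    mul_pos (splitConst_pos (by linarith) (by linarith))
      (splitConst_pos (by norm_num) (by linarith))
  have := integral_le_of_le_rpow_mul_max_rpow
    (f := fun t => ∫ s₂ in (0:ℝ)..1, ∫ s₁ in (0:ℝ)..1, kernel k α δ s₁ s₂ t)
    (γ := 0) (μ := 2 * α - 4) (by norm_num) (by linarith) (sqrt_pos.mpr hδ) hC.le
    (fun t ht => intervalIntegral.integral_nonneg zero_le_one fun s₂ hs₂ =>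
      intervalIntegral.integral_nonneg zero_le_one fun s₁ hs₁ =>
        kernel_nonneg hδ hs₁.1 hs₂.1 ht.1.le) fun t ht => ?_
  · rwa [sqrt_eq_rpow, ← rpow_mul hδ.le, show 1 / 2 * (2 * α - 4 + 1) = α - 3 / 2 by ring,
      ← mul_assoc] at this
  rw [rpow_zero, one_mul, sub_zero]
  exact (integral_integral_kernel_le hα0 (by linarith) hδ ht.1.le).trans_eq (mul_assoc _ _ _).symm
    |>.trans (mul_le_mul_of_nonneg_left (add_sq_rpow_le_max_sqrt_rpow hδ (by linarith)) hC.le)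

end kernel

theorem stmt3_general (n : ℕ) (α : ℝ) (hα0 : 0 < α) (hα1 : α < 1) :
    ∃ C : ℝ, 0 < C ∧ ∀ δ : ℝ, 0 < δ → δ < 1/2 →
      (∫ t in (0:ℝ)..1, ∫ s₂ in (0:ℝ)..1, ∫ s₁ in (0:ℝ)..1,
          s₁ ^ (α - 1) * t ^ (2*n - 3) /
            ((δ + s₁ + s₂ + t^2)^3 * (δ + s₁ + s₂ + t)^(2*n - 3)))
        ≤ C * δ ^ (α - 3/2) := by
  refine ⟨splitConst (α - 1) (α - 4) * splitConst 0 (α - 3) * splitConst 0 (2 * α - 4),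
    mul_pos (mul_pos (splitConst_pos (by linarith) (by linarith))
      (splitConst_pos (by norm_num) (by linarith))) (splitConst_pos (by norm_num) (by linarith)),
    fun δ hδ _ => integral_integral_integral_kernel_le hα0 (by linarith) hδ⟩

/-- Let `n ≥ 2`, `0 < α < 1`, `0 < δ < 1/2`. Then
`∫₀¹∫₀¹∫₀¹ s₁^(α-1) t^(2n-3) / [(δ+s₁+s₂+t²)³ (δ+s₁+s₂+t)^(2n-3)] ds₁ ds₂ dt
  ≤ C(n,α) · δ^(α - 3/2)`. -/
theorem stmt3 (n : ℕ) (hn : 2 ≤ n) (α : ℝ) (hα0 : 0 < α) (hα1 : α < 1) :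
    ∃ C : ℝ, 0 < C ∧ ∀ δ : ℝ, 0 < δ → δ < 1/2 →
      (∫ t in (0:ℝ)..1, ∫ s₂ in (0:ℝ)..1, ∫ s₁ in (0:ℝ)..1,
          s₁ ^ (α - 1) * t ^ (2*n - 3) /
            ((δ + s₁ + s₂ + t^2)^3 * (δ + s₁ + s₂ + t)^(2*n - 3)))
        ≤ C * δ ^ (α - 3/2) :=
  stmt3_general n α hα0 hα1
end

section
/- Let n ≥ 2 be an integer, α > 0, and 0 < δ < 1. Then ∫₀¹∫₀¹ s^{1+α} t^{2n-3} / (δ + s + t²)^{n+1} dt ds ≤ C(n, α) for some constant C(n, α) independent of δ. -/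
/-!
With `D = δ + s + t²` we have `s ≤ D`, `t² ≤ D` and `s + t² ≤ D`, so the integrand is at most
`s ^ α * t / (s + t²)²`. Its `t`-integral over `[0, 1]` is at most `s ^ (α - 1) / 2`, which is
integrable on `[0, 1]` with integral `1 / (2α)`, uniformly in `δ`.
-/

open MeasureTheory Set

-- `f` need not be integrable: if it is not, the left-hand side is the junk value `0`.
theorem intervalIntegral.integral_mono_of_nonneg_on_Ioc {f g : ℝ → ℝ} {a b : ℝ} (hab : a ≤ b)
    (hg : IntervalIntegrable g volume a b) (hf : ∀ x ∈ Ioc a b, 0 ≤ f x)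
    (hfg : ∀ x ∈ Ioc a b, f x ≤ g x) :
    ∫ x in a..b, f x ≤ ∫ x in a..b, g x := by
  rw [intervalIntegral.integral_of_le hab, intervalIntegral.integral_of_le hab]
  exact integral_mono_of_nonneg (ae_restrict_of_forall_mem measurableSet_Ioc hf) hg.1
    (ae_restrict_of_forall_mem measurableSet_Ioc hfg)

theorem integral_div_add_sq_sq {s : ℝ} (hs : 0 < s) (a b : ℝ) :
    ∫ t in a..b, t / (s + t ^ 2) ^ 2 = 1 / (2 * (s + a ^ 2)) - 1 / (2 * (s + b ^ 2)) := by
  have hderiv : ∀ t ∈ uIcc a b,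
      HasDerivAt (fun t => -(2 * (s + t ^ 2))⁻¹) (t / (s + t ^ 2) ^ 2) t := by
    intro t _
    have hD : 2 * (s + t ^ 2) ≠ 0 := by positivity
    refine ((((hasDerivAt_pow 2 t).const_add s).const_mul 2).inv hD).neg.congr_deriv ?_
    field_simp
    ring
  have hcont : Continuous fun t : ℝ => t / (s + t ^ 2) ^ 2 :=
    continuous_id.div (by fun_prop) fun t => by positivity
  rw [intervalIntegral.integral_eq_sub_of_hasDerivAt hderiv (hcont.intervalIntegrable a b)]
  simp only [one_div]
  ring

theorem mul_pow_div_pow_le_div_sq {n : ℕ} (hn : 2 ≤ n) {s t D : ℝ} (ht : 0 ≤ t)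
    (hD : 0 < D) (hsD : s ≤ D) (htD : t ^ 2 ≤ D) :
    s * t ^ (2 * n - 3) / D ^ (n + 1) ≤ t / D ^ 2 := by
  obtain ⟨k, rfl⟩ : ∃ k, n = k + 2 := ⟨n - 2, by omega⟩
  have hnum : s * t ^ (2 * (k + 2) - 3) ≤ D * D ^ k * t := by
    rw [show 2 * (k + 2) - 3 = 2 * k + 1 by omega, pow_succ, pow_mul]
    have : (t ^ 2) ^ k ≤ D ^ k := pow_le_pow_left₀ (by positivity) htD k
    rw [← mul_assoc]
    gcongr
  calc s * t ^ (2 * (k + 2) - 3) / D ^ (k + 2 + 1)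
      ≤ D * D ^ k * t / D ^ (k + 2 + 1) := by gcongr
    _ = t / D ^ 2 := by field_simp; ring

theorem rpow_mul_pow_div_pow_le {n : ℕ} (hn : 2 ≤ n) {α δ s t : ℝ} (hδ : 0 ≤ δ) (hs : 0 < s)
    (ht : 0 ≤ t) :
    s ^ (1 + α) * t ^ (2 * n - 3) / (δ + s + t ^ 2) ^ (n + 1)
      ≤ s ^ α * (t / (s + t ^ 2) ^ 2) := by
  have hD : 0 < δ + s + t ^ 2 := by positivity
  calc s ^ (1 + α) * t ^ (2 * n - 3) / (δ + s + t ^ 2) ^ (n + 1)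
      = s ^ α * (s * t ^ (2 * n - 3) / (δ + s + t ^ 2) ^ (n + 1)) := by
        rw [add_comm, Real.rpow_add_one hs.ne']
        ring
    _ ≤ s ^ α * (t / (δ + s + t ^ 2) ^ 2) := by
        refine mul_le_mul_of_nonneg_left ?_ (by positivity)
        exact mul_pow_div_pow_le_div_sq hn ht hD (by nlinarith [sq_nonneg t]) (by linarith)
    _ ≤ s ^ α * (t / (s + t ^ 2) ^ 2) := by gcongr; linarith

theorem integral_rpow_mul_pow_div_pow_le {n : ℕ} (hn : 2 ≤ n) {α δ s : ℝ} (hδ : 0 ≤ δ)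
    (hs : 0 < s) :
    ∫ t in (0 : ℝ)..1, s ^ (1 + α) * t ^ (2 * n - 3) / (δ + s + t ^ 2) ^ (n + 1)
      ≤ s ^ (α - 1) / 2 := by
  have hcont : Continuous fun t : ℝ => s ^ α * (t / (s + t ^ 2) ^ 2) :=
    continuous_const.mul (continuous_id.div (by fun_prop) fun t => by positivity)
  calc ∫ t in (0 : ℝ)..1, s ^ (1 + α) * t ^ (2 * n - 3) / (δ + s + t ^ 2) ^ (n + 1)
      ≤ ∫ t in (0 : ℝ)..1, s ^ α * (t / (s + t ^ 2) ^ 2) :=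
        intervalIntegral.integral_mono_of_nonneg_on_Ioc zero_le_one (hcont.intervalIntegrable 0 1)
          (fun t ht => by have := ht.1.le; positivity)
          (fun t ht => rpow_mul_pow_div_pow_le hn hδ hs ht.1.le)
    _ = s ^ α * (1 / (2 * s) - 1 / (2 * (s + 1))) := by
        rw [intervalIntegral.integral_const_mul, integral_div_add_sq_sq hs]
        norm_num
    _ ≤ s ^ α * (1 / (2 * s)) := by gcongr; exact sub_le_self _ (by positivity)
    _ = s ^ (α - 1) / 2 := by rw [Real.rpow_sub_one hs.ne']; field_simp

theorem integral_rpow_sub_one_div_two {α : ℝ} (hα : 0 < α) :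
    ∫ s in (0 : ℝ)..1, s ^ (α - 1) / 2 = 1 / (2 * α) := by
  rw [intervalIntegral.integral_div, integral_rpow (Or.inl (by linarith)), sub_add_cancel,
    Real.one_rpow, Real.zero_rpow hα.ne', sub_zero]
  ring

/-- Let `n ≥ 2`, `α > 0`, `0 < δ < 1`. Then
`∫₀¹∫₀¹ s^(1+α) t^(2n-3) / (δ + s + t²)^(n+1) dt ds ≤ C(n,α)`,
with `C(n,α)` independent of `δ`. -/
theorem stmt5 (n : ℕ) (hn : 2 ≤ n) (α : ℝ) (hα : 0 < α) :
    ∃ C : ℝ, 0 < C ∧ ∀ δ : ℝ, 0 < δ → δ < 1 →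
      (∫ s in (0:ℝ)..1, ∫ t in (0:ℝ)..1,
          s ^ (1 + α) * t ^ (2*n - 3) / (δ + s + t^2)^(n+1)) ≤ C := by
  refine ⟨1 / (2 * α), by positivity, fun δ hδ _ => ?_⟩
  have hbound : IntervalIntegrable (fun s : ℝ => s ^ (α - 1) / 2) volume 0 1 :=
    (intervalIntegral.intervalIntegrable_rpow' (by linarith)).div_const 2
  calc (∫ s in (0:ℝ)..1, ∫ t in (0:ℝ)..1,
          s ^ (1 + α) * t ^ (2*n - 3) / (δ + s + t^2)^(n+1))
      ≤ ∫ s in (0:ℝ)..1, s ^ (α - 1) / 2 :=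
        intervalIntegral.integral_mono_of_nonneg_on_Ioc zero_le_one hbound
          (fun s hs => intervalIntegral.integral_nonneg zero_le_one fun t ht => by
            have := hs.1; have := ht.1; positivity)
          (fun s hs => integral_rpow_mul_pow_div_pow_le hn hδ.le hs.1)
    _ = 1 / (2 * α) := integral_rpow_sub_one_div_two hα
end

section
/- Let u ∈ W^{1,1}(ℝᴺ₊) have bounded support, where ℝᴺ₊ = {(x′, x_N) : x_N > 0}. Then the trace Tr(u) ∈ L¹(ℝ^{N−1}) satisfies ∫_{ℝ^{N−1}} |Tr(u)(x′)| dx′ ≤ ∫_{ℝᴺ₊} |∂u/∂x_N (x)| dx. -/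
/-!
Along almost every vertical line the slice `τ ↦ u (x', τ)` has an integrable derivative and
vanishes for large `τ`, so by the fundamental theorem of calculus it has the limit
`-∫₀^∞ ∂ₙu (x', τ) dτ` as `τ → 0⁺`. The trace applies to every slice a linear functional that
extends "limit at `0⁺`" from the functions having one to all functions (such an extension exists
by linear algebra alone). On each good line `|Tr u (x')| ≤ ∫₀^∞ |∂ₙu (x', τ)| dτ`, and Fubini
integrates this over `x'`.
-/

open MeasureTheory Filter Topology Set

section LimitFunctional

variable {α 𝕜 : Type*} [NormedField 𝕜]

variable (𝕜) in
def convergentSubmodule (l : Filter α) : Submodule 𝕜 (α → 𝕜) where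
  carrier := {f | ∃ L, Tendsto f l (𝓝 L)}
  add_mem' := fun ⟨L, hL⟩ ⟨M, hM⟩ => ⟨L + M, hL.add hM⟩
  zero_mem' := ⟨0, tendsto_const_nhds⟩
  smul_mem' := fun c _ ⟨L, hL⟩ => ⟨c * L, hL.const_mul c⟩

noncomputable def convergentSubmodule.lim (l : Filter α) [l.NeBot] :
    convergentSubmodule 𝕜 l →ₗ[𝕜] 𝕜 where
  toFun f := limUnder l (f : α → 𝕜)
  map_add' f g := ((tendsto_nhds_limUnder f.2).add (tendsto_nhds_limUnder g.2)).limUnder_eq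
  map_smul' c f := ((tendsto_nhds_limUnder f.2).const_mul c).limUnder_eq

theorem exists_linearMap_eq_of_tendsto (l : Filter α) [l.NeBot] :
    ∃ ℓ : (α → 𝕜) →ₗ[𝕜] 𝕜, ∀ f L, Tendsto f l (𝓝 L) → ℓ f = L := by
  obtain ⟨ℓ, hℓ⟩ := LinearMap.exists_extend (convergentSubmodule.lim (𝕜 := 𝕜) l)
  refine ⟨ℓ, fun f L hf => ?_⟩
  calc ℓ f = convergentSubmodule.lim l ⟨f, L, hf⟩ := LinearMap.congr_fun hℓ ⟨f, L, hf⟩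
    _ = L := hf.limUnder_eq

end LimitFunctional

theorem tendsto_nhdsGT_of_hasDerivAt_of_integrableOn_Ioi {E : Type*} [NormedAddCommGroup E]
    [NormedSpace ℝ E] [CompleteSpace E] {f f' : ℝ → E} {a : ℝ} {m : E}
    (hderiv : ∀ x ∈ Ioi a, HasDerivAt f (f' x) x) (f'int : IntegrableOn f' (Ioi a))
    (hf : Tendsto f atTop (𝓝 m)) : Tendsto f (𝓝[>] a) (𝓝 (m - ∫ x in Ioi a, f' x)) := by
  have hprim : Tendsto (fun t => ∫ x in Ioi t, f' x) (𝓝[>] a) (𝓝 (∫ x in Ioi a, f' x)) :=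
    f'int.continuousWithinAt_Ici_primitive_Ioi.mono Ioi_subset_Ici_self
  refine (hprim.const_sub m).congr' ?_
  filter_upwards [self_mem_nhdsWithin] with t (ht : a < t)
  rw [integral_Ioi_of_hasDerivAt_of_tendsto (hderiv t ht).continuousAt.continuousWithinAt
    (fun x hx => hderiv x (ht.trans hx)) (f'int.mono_set (Ioi_subset_Ioi ht.le)) hf, sub_sub_cancel]

theorem tendsto_atTop_of_isBounded_support {X M : Type*} [Bornology X] [Zero M]
    [TopologicalSpace M] {u : X × ℝ → M} (hu : Bornology.IsBounded (Function.support u)) (x : X) :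
    Tendsto (fun τ => u (x, τ)) atTop (𝓝 0) := by
  obtain ⟨B, hB⟩ := hu.image_snd.bddAbove
  refine tendsto_const_nhds.congr' ?_
  filter_upwards [Ioi_mem_atTop B] with τ (hτ : B < τ)
  by_contra h
  exact hτ.not_ge (hB ⟨(x, τ), Ne.symm h, rfl⟩)

theorem tendsto_nhdsGT_of_continuousOn_closure {X Y : Type*} [TopologicalSpace X]
    [TopologicalSpace Y] {u : X × ℝ → Y} {a : ℝ} (hu : ContinuousOn u (closure {x | a < x.2}))
    (x : X) : Tendsto (fun τ => u (x, τ)) (𝓝[>] a) (𝓝 (u (x, a))) := by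
  have hslice : Continuous fun τ : ℝ => (x, τ) := by fun_prop
  have hmaps : MapsTo (fun τ : ℝ => (x, τ)) (Ioi a) {x | a < x.2} := fun _ hτ => hτ
  have hmem : (x, a) ∈ closure {x : X × ℝ | a < x.2} :=
    map_mem_closure hslice (by simp) hmaps
  exact (hu _ hmem).comp hslice.continuousWithinAt (hmaps.mono_right subset_closure)

section Fubini

variable {X Y : Type*} [MeasurableSpace X] [MeasurableSpace Y] {μ : Measure X} {ν : Measure Y}
  [SFinite μ]

theorem Measure.prod_restrict_preimage_snd [SFinite ν] (t : Set Y) :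
    (μ.prod ν).restrict (Prod.snd ⁻¹' t) = μ.prod (ν.restrict t) := by
  rw [← univ_prod, ← Measure.prod_restrict, Measure.restrict_univ]

theorem integral_norm_integral_le_integral_norm [SFinite ν] {E : Type*} [NormedAddCommGroup E]
    [NormedSpace ℝ E] {f : X × Y → E} (hf : Integrable f (μ.prod ν)) :
    ∫ x, ‖∫ y, f (x, y) ∂ν‖ ∂μ ≤ ∫ z, ‖f z‖ ∂(μ.prod ν) := by
  calc ∫ x, ‖∫ y, f (x, y) ∂ν‖ ∂μ ≤ ∫ x, ∫ y, ‖f (x, y)‖ ∂ν ∂μ :=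
        integral_mono hf.integral_prod_left.norm hf.integral_norm_prod_left
          fun x => norm_integral_le_integral_norm _
    _ = ∫ z, ‖f z‖ ∂(μ.prod ν) := (integral_prod _ hf.norm).symm

end Fubini

theorem ae_tendsto_nhdsGT_zero_of_integrable_prod {X : Type*} [MeasurableSpace X]
    {μ : Measure X} [SFinite μ] {u uN : X × ℝ → ℝ}
    (huN : Integrable uN (μ.prod (volume.restrict (Ioi 0))))
    (hu : ∀ x, Tendsto (fun τ => u (x, τ)) atTop (𝓝 0))
    (hderiv : ∀ z : X × ℝ, 0 < z.2 → HasDerivAt (fun τ => u (z.1, τ)) (uN z) z.2) :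
    ∀ᵐ x ∂μ, Tendsto (fun τ => u (x, τ)) (𝓝[>] 0) (𝓝 (-∫ τ in Ioi 0, uN (x, τ))) := by
  filter_upwards [huN.prod_right_ae] with x hx
  simpa using tendsto_nhdsGT_of_hasDerivAt_of_integrableOn_Ioi
    (fun τ hτ => hderiv (x, τ) hτ) hx (hu x)

theorem stmt10_general (N : ℕ) :
    ∃ T : ((EuclideanSpace ℝ (Fin (N-1)) × ℝ) → ℝ) → (EuclideanSpace ℝ (Fin (N-1)) → ℝ),
      IsLinearMap ℝ T ∧
      ∀ (u : (EuclideanSpace ℝ (Fin (N-1)) × ℝ) → ℝ)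
        (uN : (EuclideanSpace ℝ (Fin (N-1)) × ℝ) → ℝ),
        Bornology.IsBounded (Function.support u) →
        IntegrableOn u {x | 0 < x.2} →
        IntegrableOn uN {x | 0 < x.2} →
        (∀ x : EuclideanSpace ℝ (Fin (N-1)) × ℝ, 0 < x.2 →
          HasDerivAt (fun τ => u (x.1, τ)) (uN x) x.2) →
        (ContinuousOn u (closure {x | 0 < x.2}) → ∀ x', T u x' = u (x', 0)) ∧
        Integrable (T u) ∧
        ∫ x', |T u x'| ≤ ∫ x in {x | 0 < x.2}, |uN x| := by
  obtain ⟨ℓ, hℓ⟩ := exists_linearMap_eq_of_tendsto (𝕜 := ℝ) (𝓝[>] (0 : ℝ))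
  refine ⟨fun u x' => ℓ fun τ => u (x', τ),
    ⟨fun u v => funext fun _ => map_add ℓ _ _, fun c u => funext fun _ => map_smul ℓ c _⟩,
    fun u uN hbdd _ huN hderiv => ?_⟩
  have hhalf : (volume : Measure (EuclideanSpace ℝ (Fin (N-1)) × ℝ)).restrict {x | 0 < x.2} =
      volume.prod (volume.restrict (Ioi 0)) := by
    rw [Measure.volume_eq_prod]
    exact Measure.prod_restrict_preimage_snd _
  rw [IntegrableOn, hhalf] at huN
  rw [hhalf]
  have htrace : (fun x' => ℓ fun τ => u (x', τ)) =ᵐ[volume]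
      fun x' => -∫ τ in Ioi 0, uN (x', τ) := by
    filter_upwards [ae_tendsto_nhdsGT_zero_of_integrable_prod huN
      (tendsto_atTop_of_isBounded_support hbdd) hderiv] with x' hx' using hℓ _ _ hx'
  refine ⟨fun hc x' => hℓ _ _ (tendsto_nhdsGT_of_continuousOn_closure hc x'),
    huN.integral_prod_left.neg.congr htrace.symm, ?_⟩
  calc ∫ x', |ℓ fun τ => u (x', τ)| = ∫ x', ‖∫ τ in Ioi 0, uN (x', τ)‖ :=
        integral_congr_ae <| by
          filter_upwards [htrace] with x' hx'
          rw [hx', abs_neg, Real.norm_eq_abs]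
    _ ≤ ∫ x, ‖uN x‖ ∂(volume.prod (volume.restrict (Ioi 0))) :=
        integral_norm_integral_le_integral_norm huN
    _ = _ := by simp only [Real.norm_eq_abs]

/-- Trace estimate on the half-space `ℝᴺ₊ = ℝ^{N-1} × (0,∞)`: there is a linear trace
operator `T`, agreeing with `u ↦ u(·, 0)` for functions continuous up to the boundary,
such that every `u ∈ W^{1,1}(ℝᴺ₊)` with bounded support (encoded via a pointwise
partial derivative `uN` in the vertical direction, with `u` and `uN` integrable on the
half-space) satisfies `T u ∈ L¹(ℝ^{N-1})` and
`∫_{ℝ^{N-1}} |T u| ≤ ∫_{ℝᴺ₊} |∂u/∂x_N|`. -/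
theorem stmt10 (N : ℕ) (hN : 2 ≤ N) :
    ∃ T : ((EuclideanSpace ℝ (Fin (N-1)) × ℝ) → ℝ) → (EuclideanSpace ℝ (Fin (N-1)) → ℝ),
      IsLinearMap ℝ T ∧
      ∀ (u : (EuclideanSpace ℝ (Fin (N-1)) × ℝ) → ℝ)
        (uN : (EuclideanSpace ℝ (Fin (N-1)) × ℝ) → ℝ),
        Bornology.IsBounded (Function.support u) →
        IntegrableOn u {x | 0 < x.2} →
        IntegrableOn uN {x | 0 < x.2} →
        (∀ x : EuclideanSpace ℝ (Fin (N-1)) × ℝ, 0 < x.2 →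
          HasDerivAt (fun τ => u (x.1, τ)) (uN x) x.2) →
        (ContinuousOn u (closure {x | 0 < x.2}) → ∀ x', T u x' = u (x', 0)) ∧
        Integrable (T u) ∧
        ∫ x', |T u x'| ≤ ∫ x in {x | 0 < x.2}, |uN x| :=
  stmt10_general N
end
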